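/- arXiv:2503.02100 — 2 statements merged into one kernel-verified Lean document; each statement's English description precedes it below -/
import Mathlib

section
/- Let n be a positive integer, let X ⊆ ℤ_n be a finite nonempty set, and let K ≥ 1 be a real number such that |X + X| ≤ K|X|. Then the Freiman dimension of X satisfies dim_f(X) < 2K. -/
open Pointwise

/-- A Freiman isomorphism between finite subsets of abelian groups: a bijection `φ : A → B`
such that `a + b = a' + b' ↔ φ a + φ b = φ a' + φ b'` for all `a, b, a', b' ∈ A`. -/
def IsFreimanIso {G H : Type*} [AddCommGroup G] [AddCommGroup H]
    (A : Finset G) (B : Finset H) : Prop :=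
  ∃ φ : G → H, Set.BijOn φ ↑A ↑B ∧
    ∀ a ∈ A, ∀ b ∈ A, ∀ a' ∈ A, ∀ b' ∈ A,
      (a + b = a' + b' ↔ φ a + φ b = φ a' + φ b')

/-- A finite subset of `ℤ^d` has full rank if it affinely spans `ℝ^d`. -/
def FullRank {d : ℕ} (B : Finset (Fin d → ℤ)) : Prop :=
  affineSpan ℝ ((fun v : Fin d → ℤ => fun i => (v i : ℝ)) '' ↑B) = ⊤

/-- The Freiman dimension of a finite set `A`: the largest `d` for which there is a
full-rank subset of `ℤ^d` Freiman isomorphic to `A`. -/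
noncomputable def freimanDim {G : Type*} [AddCommGroup G] (A : Finset G) : ℕ :=
  sSup {d : ℕ | ∃ B : Finset (Fin d → ℤ), FullRank B ∧ IsFreimanIso A B}

/-!
A full-rank `B ⊆ ℤ^d` has affine dimension `d` in `ℝ^d`, and a Freiman isomorphism preserves
`|X|` and `|X + X|`, so it suffices to prove Freiman's lemma: a finite set `A` of affine dimension
`r` in a real vector space satisfies `|A + A| ≥ (r + 1)|A| - r(r + 1)/2`. As `r + 1 ≤ |A|`, this
gives `(r + 2)|A| ≤ 2|A + A| ≤ 2K|A|`.

Freiman's lemma follows by induction, removing the point `v` of `A` where a linear functional `f`,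
injective on `A`, is largest. Let `A' = A \ {v}`. If `v` is outside the affine span of `A'`, every
sum `v + x` with `x ∈ A'` is new. Otherwise at least `r` of them are new: project `A'` centrally
from `v` onto a hyperplane `f = const`. Over each extreme point of the projection, the point `x`
of `A'` nearest to `v` has `v + x ∉ A' + A'`, and the extreme points span the projection.
-/

open Module Finset

theorem Module.exists_dual_injOn {K V : Type*} [Field K] [Infinite K] [AddCommGroup V]
    [Module K V] {s : Set V} (hs : s.Finite) : ∃ f : Dual K V, s.InjOn f := by
  have : Finite {p : s × s // p.1 ≠ p.2} := by have := hs.to_subtype; infer_instance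
  obtain ⟨f, hf⟩ := exists_dual_forall_apply_ne_zero (K := K)
    (fun p : {p : s × s // p.1 ≠ p.2} => (p.1.1 : V) - p.1.2)
    (fun p => sub_ne_zero.mpr (Subtype.coe_injective.ne p.2))
  refine ⟨f, fun x hx y hy hxy => by_contra fun hne => ?_⟩
  exact hf ⟨(⟨x, hx⟩, ⟨y, hy⟩), fun h => hne (congrArg Subtype.val h)⟩ (by simp [hxy])

theorem add_notMem_add_of_notMem_affineSpan {k V : Type*} [Ring k] [AddCommGroup V] [Module k V]
    [DecidableEq V] {A : Finset V} {v x : V} (hv : v ∉ affineSpan k (A : Set V)) (hx : x ∈ A) :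
    v + x ∉ A + A := by
  intro h
  obtain ⟨y, hy, z, hz, hyz⟩ := mem_add.mp h
  have hdir : y -ᵥ x ∈ (affineSpan k (A : Set V)).direction := by
    rw [direction_affineSpan]
    exact vsub_mem_vectorSpan k (mem_coe.mpr hy) (mem_coe.mpr hx)
  have hmem := AffineSubspace.vadd_mem_of_mem_direction hdir (mem_affineSpan k (mem_coe.mpr hz))
  rw [vsub_eq_sub, vadd_eq_add, sub_add_eq_add_sub, hyz, add_sub_cancel_right] at hmem
  exact hv hmem

theorem card_add_add_card_filter_lt_card_insert_add {G : Type*} [AddCancelCommMonoid G]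
    [DecidableEq G] (A : Finset G) {v : G} (hv : v + v ∉ A + A) :
    #(A + A) + #{x ∈ A | v + x ∉ A + A} < #(insert v A + insert v A) := by
  set N := {x ∈ A | v + x ∉ A + A}
  have hvA : v ∉ A := fun h => hv (add_mem_add h h)
  have hdisj : Disjoint (A + A) (N.image (v + ·)) := by
    rw [disjoint_right]
    rintro _ hs
    obtain ⟨x, hx, rfl⟩ := mem_image.mp hs
    exact (mem_filter.mp hx).2
  have hnotin : v + v ∉ A + A ∪ N.image (v + ·) := by
    rw [mem_union, not_or]
    refine ⟨hv, fun h => hvA ?_⟩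
    obtain ⟨x, hx, hxv⟩ := mem_image.mp h
    exact add_left_cancel hxv ▸ (mem_filter.mp hx).1
  have hsub : insert (v + v) (A + A ∪ N.image (v + ·)) ⊆ insert v A + insert v A := by
    refine insert_subset (add_mem_add (mem_insert_self v A) (mem_insert_self v A))
      (union_subset (add_subset_add (subset_insert v A) (subset_insert v A)) ?_)
    intro s hs
    obtain ⟨x, hx, rfl⟩ := mem_image.mp hs
    exact add_mem_add (mem_insert_self v A) (mem_insert_of_mem (mem_filter.mp hx).1)
  have := card_le_card hsub
  rw [card_insert_of_notMem hnotin, card_union_of_disjoint hdisj,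
    card_image_of_injective _ (add_right_injective v)] at this
  omega

section CentralProjection

variable {V : Type*} [AddCommGroup V] [Module ℝ V] (f : V →ₗ[ℝ] ℝ) (v : V)

/-- The ray from `v` through `x` meets the hyperplane `f = f v - 1` at
`v + centralProjection f v x`. -/
noncomputable def centralProjection (x : V) : V := (f v - f x)⁻¹ • (x - v)

theorem centralProjection_mem_openSegment {x y z : V} (hy : f y < f v) (hz : f z < f v)
    (h : v + x = y + z) :
    centralProjection f v x ∈
      openSegment ℝ (centralProjection f v y) (centralProjection f v z) := by
  have hfx : f v - f x = (f v - f y) + (f v - f z) := by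
    have := congrArg f h
    simp only [map_add] at this
    linarith
  have hy' : 0 < f v - f y := sub_pos.mpr hy
  have hz' : 0 < f v - f z := sub_pos.mpr hz
  have hxv : x - v = (y - v) + (z - v) := by rw [sub_add_sub_comm, ← h]; abel
  simp only [centralProjection, hfx]
  refine ⟨(f v - f y) / (f v - f y + (f v - f z)), (f v - f z) / (f v - f y + (f v - f z)),
    by positivity, by positivity, by field_simp, ?_⟩
  rw [smul_smul, smul_smul, hxv, smul_add]
  congr 2 <;> field_simp

end CentralProjection

noncomputable def affineDim {E : Type*} [AddCommGroup E] [Module ℝ E] (A : Finset E) : ℕ :=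
  finrank ℝ (vectorSpan ℝ (A : Set E))

section FreimanLemma

variable {E : Type*} [NormedAddCommGroup E] [NormedSpace ℝ E]

theorem Set.Finite.subset_convexHull_extremePoints {s : Set E} (hs : s.Finite) :
    s ⊆ convexHull ℝ (s.extremePoints ℝ) := by
  have hext : (convexHull ℝ s).extremePoints ℝ ⊆ s.extremePoints ℝ :=
    fun x hx => inter_extremePoints_subset_extremePoints_of_subset (subset_convexHull ℝ s)
      ⟨extremePoints_convexHull_subset hx, hx⟩
  have hfin : ((convexHull ℝ s).extremePoints ℝ).Finite :=
    hs.subset extremePoints_convexHull_subset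
  calc s ⊆ convexHull ℝ s := subset_convexHull ℝ s
    _ = convexHull ℝ ((convexHull ℝ s).extremePoints ℝ) := by
      rw [← (hfin.isClosed_convexHull ℝ).closure_eq,
        closure_convexHull_extremePoints (hs.isCompact_convexHull ℝ) (convex_convexHull ℝ s)]
    _ ⊆ convexHull ℝ (s.extremePoints ℝ) := convexHull_mono hext

variable [DecidableEq E] (f : E →ₗ[ℝ] ℝ) {v : E} {A : Finset E}

theorem exists_add_notMem_add_of_mem_extremePoints (hA : ∀ x ∈ A, f x < f v) {p : E}
    (hp : p ∈ (centralProjection f v '' A).extremePoints ℝ) :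
    ∃ x ∈ A, centralProjection f v x = p ∧ v + x ∉ A + A := by
  obtain ⟨⟨x₀, hx₀, rfl⟩, hext⟩ := mem_extremePoints.mp hp
  obtain ⟨x, hx, hxmax⟩ := exists_max_image {y ∈ A | centralProjection f v y =
    centralProjection f v x₀} f ⟨x₀, by simpa using hx₀⟩
  rw [mem_filter] at hx
  refine ⟨x, hx.1, hx.2, fun hsum => ?_⟩
  obtain ⟨y, hy, z, hz, hyz⟩ := mem_add.mp hsum
  have hseg := centralProjection_mem_openSegment f v (hA y hy) (hA z hz) hyz.symm
  rw [hx.2] at hseg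
  obtain ⟨hpy, hpz⟩ := hext _ (Set.mem_image_of_mem _ hy) _ (Set.mem_image_of_mem _ hz) hseg
  have hfy := hxmax y (by simp [hy, hpy])
  have hfz := hxmax z (by simp [hz, hpz])
  have := congrArg f hyz
  simp only [map_add] at this
  linarith [hA x hx.1]

theorem affineDim_le_card_filter_add_notMem_add (hA : ∀ x ∈ A, f x < f v) :
    affineDim A ≤ #{x ∈ A | v + x ∉ A + A} := by
  set P := centralProjection f v
  have hfin : (P '' A).Finite := A.finite_toSet.image P
  set Ext := (hfin.subset (extremePoints_subset (𝕜 := ℝ))).toFinset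
  have hsub : ∀ x ∈ A, x - v ∈ Submodule.span ℝ (Ext : Set E) := by
    intro x hx
    have hPx : P x ∈ Submodule.span ℝ (Ext : Set E) := by
      refine convexHull_min Submodule.subset_span (Submodule.convex _) ?_
      simpa [Ext] using hfin.subset_convexHull_extremePoints (Set.mem_image_of_mem P hx)
    have : x - v = (f v - f x) • P x := by
      simp only [P, centralProjection, smul_smul]
      rw [mul_inv_cancel₀ (sub_pos.mpr (hA x hx)).ne', one_smul]
    rw [this]
    exact Submodule.smul_mem _ _ hPx
  have hspan : vectorSpan ℝ (A : Set E) ≤ Submodule.span ℝ (Ext : Set E) := by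
    rw [vectorSpan_def, Submodule.span_le]
    rintro _ ⟨x, hx, y, hy, rfl⟩
    change x - y ∈ Submodule.span ℝ (Ext : Set E)
    rw [← sub_sub_sub_cancel_right x y v]
    exact Submodule.sub_mem _ (hsub x hx) (hsub y hy)
  have hcard : Ext ⊆ {x ∈ A | v + x ∉ A + A}.image P := by
    intro p hp
    obtain ⟨x, hx, rfl, hnew⟩ :=
      exists_add_notMem_add_of_mem_extremePoints f hA (by simpa [Ext] using hp)
    exact mem_image_of_mem P (mem_filter.mpr ⟨hx, hnew⟩)
  calc affineDim A
      ≤ finrank ℝ (Submodule.span ℝ (Ext : Set E)) := Submodule.finrank_mono hspan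
    _ ≤ #Ext := finrank_span_finset_le_card Ext
    _ ≤ #({x ∈ A | v + x ∉ A + A}.image P) := card_le_card hcard
    _ ≤ #{x ∈ A | v + x ∉ A + A} := card_image_le

theorem affineDim_insert_eq_or_eq_add_one (v : E) (A : Finset E) :
    affineDim (insert v A) = affineDim A ∨ affineDim (insert v A) = affineDim A + 1 := by
  have := finiteDimensional_vectorSpan_of_finite ℝ (insert v A).finite_toSet
  have hge : affineDim A ≤ affineDim (insert v A) :=
    Submodule.finrank_mono (vectorSpan_mono ℝ (coe_subset.mpr (subset_insert v A)))
  have hle : affineDim (insert v A) ≤ affineDim A + 1 := by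
    rw [affineDim, coe_insert]
    exact finrank_vectorSpan_insert_le_set ℝ _ v
  omega

theorem two_mul_affineDim_add_one_mul_card_insert_le (hA : ∀ x ∈ A, f x < f v)
    (ih : 2 * (affineDim A + 1) * #A ≤ 2 * #(A + A) + affineDim A * (affineDim A + 1)) :
    2 * (affineDim (insert v A) + 1) * #(insert v A) ≤
      2 * #(insert v A + insert v A) + affineDim (insert v A) * (affineDim (insert v A) + 1) := by
  have hvv : v + v ∉ A + A := by
    intro h
    obtain ⟨y, hy, z, hz, hyz⟩ := mem_add.mp h
    have := congrArg f hyz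
    simp only [map_add] at this
    linarith [hA y hy, hA z hz]
  have hcount := card_add_add_card_filter_lt_card_insert_add A hvv
  have hnew := affineDim_le_card_filter_add_notMem_add f hA
  rw [card_insert_of_notMem fun h => hvv (add_mem_add h h)]
  by_cases hv : v ∈ affineSpan ℝ (A : Set E)
  · have hdim : affineDim (insert v A) = affineDim A := by
      rw [affineDim, affineDim, coe_insert, vectorSpan_insert_eq_vectorSpan hv]
    rw [hdim]
    nlinarith
  · have hall : {x ∈ A | v + x ∉ A + A} = A :=
      filter_true_of_mem fun x hx => add_notMem_add_of_notMem_affineSpan hv hx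
    rw [hall] at hcount hnew
    obtain hdim | hdim := affineDim_insert_eq_or_eq_add_one v A <;> rw [hdim] <;> nlinarith

theorem two_mul_affineDim_add_one_mul_card_le (A : Finset E) :
    2 * (affineDim A + 1) * #A ≤ 2 * #(A + A) + affineDim A * (affineDim A + 1) := by
  obtain ⟨f, hf⟩ := Module.exists_dual_injOn (K := ℝ) A.finite_toSet
  suffices ∀ B ⊆ A,
      2 * (affineDim B + 1) * #B ≤ 2 * #(B + B) + affineDim B * (affineDim B + 1) from
    this A subset_rfl
  intro B
  induction B using Finset.induction_on_max_value f with
  | empty => simp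
  | insert v B hvB hmax ih =>
    intro hsub
    refine two_mul_affineDim_add_one_mul_card_insert_le f (fun x hx => ?_)
      (ih ((subset_insert v B).trans hsub))
    refine (hmax x hx).lt_of_ne fun h => hvB ?_
    rwa [← hf (hsub (mem_insert_of_mem hx)) (hsub (mem_insert_self v B)) h]

theorem affineDim_add_two_mul_card_le (A : Finset E) : (affineDim A + 2) * #A ≤ 2 * #(A + A) := by
  obtain rfl | hA := A.eq_empty_or_nonempty
  · simp
  have hpos := hA.card_pos
  have hdim : affineDim A + 1 ≤ #A := by
    have := finrank_vectorSpan_image_finset_le ℝ id A (n := #A - 1) (by omega)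
    rw [image_id] at this
    rw [affineDim]
    omega
  nlinarith [two_mul_affineDim_add_one_mul_card_le A]

end FreimanLemma

section FreimanIso

variable {G H : Type*} [AddCommGroup G] [AddCommGroup H] {A : Finset G} {B : Finset H}

theorem IsFreimanIso.card_eq (h : IsFreimanIso A B) : #A = #B := by
  obtain ⟨φ, hφ, -⟩ := h
  exact hφ.finsetCard_eq φ

theorem IsFreimanIso.card_add_self_le [DecidableEq G] [DecidableEq H] (h : IsFreimanIso A B) :
    #(B + B) ≤ #(A + A) := by
  obtain ⟨φ, hφ, hiso⟩ := h
  set σ : G × G → G := fun p => p.1 + p.2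
  set ρ : G → G × G := Function.invFunOn σ (A ×ˢ A : Set (G × G))
  refine card_le_card_of_surjOn (fun s => φ (ρ s).1 + φ (ρ s).2) ?_
  intro _ hs
  obtain ⟨_, hy, _, hz, rfl⟩ := mem_add.mp hs
  obtain ⟨a, ha, rfl⟩ := hφ.surjOn hy
  obtain ⟨b, hb, rfl⟩ := hφ.surjOn hz
  have hσ : ∃ p ∈ (A ×ˢ A : Set (G × G)), σ p = a + b := ⟨(a, b), ⟨ha, hb⟩, rfl⟩
  obtain ⟨hρ₁, hρ₂⟩ := Function.invFunOn_mem hσ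
  exact ⟨a + b, add_mem_add ha hb,
    (hiso _ hρ₁ _ hρ₂ a ha b hb).mp (Function.invFunOn_eq hσ)⟩

end FreimanIso

section IntegerLattice

variable {d : ℕ} {B : Finset (Fin d → ℤ)}

theorem FullRank.nonempty (h : FullRank B) : B.Nonempty := by
  rw [nonempty_iff_ne_empty]
  rintro rfl
  simp [FullRank] at h

theorem FullRank.affineDim_image (h : FullRank B) :
    affineDim (B.image ((Int.castAddHom ℝ).compLeft (Fin d))) = d := by
  have hspan : affineSpan ℝ ((Int.castAddHom ℝ).compLeft (Fin d) '' B) = ⊤ := h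
  rw [affineDim, ← direction_affineSpan, coe_image, hspan, AffineSubspace.direction_top,
    finrank_top, finrank_fin_fun]

theorem FullRank.add_two_mul_card_le (h : FullRank B) : (d + 2) * #B ≤ 2 * #(B + B) := by
  set c := (Int.castAddHom ℝ).compLeft (Fin d)
  have hc : Function.Injective c := Int.cast_injective.comp_left
  have := affineDim_add_two_mul_card_le (B.image c)
  rwa [h.affineDim_image, ← image_add, card_image_of_injective _ hc,
    card_image_of_injective _ hc] at this

end IntegerLattice

theorem add_two_le_two_mul_of_isFreimanIso {G : Type*} [AddCommGroup G] [DecidableEq G]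
    {X : Finset G} {K : ℝ} (hdoub : (#(X + X) : ℝ) ≤ K * #X) {d : ℕ}
    {B : Finset (Fin d → ℤ)} (hB : FullRank B) (hXB : IsFreimanIso X B) :
    (d : ℝ) + 2 ≤ 2 * K := by
  have hX : (0 : ℝ) < #X := by rw [hXB.card_eq]; exact_mod_cast hB.nonempty.card_pos
  have hfreiman : ((d : ℝ) + 2) * #X ≤ 2 * #(X + X) := by
    rw [hXB.card_eq]
    exact_mod_cast hB.add_two_mul_card_le.trans (Nat.mul_le_mul_left 2 hXB.card_add_self_le)
  nlinarith

theorem freimanDim_lt_two_mul_of_small_doubling_general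
    (n : ℕ) (X : Finset (ZMod n))
    (K : ℝ) (hK : 1 ≤ K) (hdoub : ((X + X).card : ℝ) ≤ K * X.card) :
    (freimanDim X : ℝ) < 2 * K := by
  set S := {d : ℕ | ∃ B : Finset (Fin d → ℤ), FullRank B ∧ IsFreimanIso X B}
  have hbound : ∀ d ∈ S, (d : ℝ) + 2 ≤ 2 * K :=
    fun d ⟨B, hB, hXB⟩ => add_two_le_two_mul_of_isFreimanIso hdoub hB hXB
  change ((sSup S : ℕ) : ℝ) < 2 * K
  obtain hS | hS := S.eq_empty_or_nonempty
  · rw [hS, csSup_empty, bot_eq_zero, Nat.cast_zero]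
    linarith
  · have hbdd : BddAbove S :=
      ⟨⌊2 * K⌋₊, fun d hd => Nat.le_floor (by linarith [hbound d hd])⟩
    linarith [hbound _ (Nat.sSup_mem hS hbdd)]

theorem freimanDim_lt_two_mul_of_small_doubling
    (n : ℕ) (hn : 0 < n) (X : Finset (ZMod n)) (hX : X.Nonempty)
    (K : ℝ) (hK : 1 ≤ K) (hdoub : ((X + X).card : ℝ) ≤ K * X.card) :
    (freimanDim X : ℝ) < 2 * K :=
  freimanDim_lt_two_mul_of_small_doubling_general n X K hK hdoub
end

section
/- Let G be an abelian group and let T', X be finite nonempty subsets of G. Then for every integer t with 1 ≤ t ≤ |T'|, there exists a subset T ⊆ T' of size |T| = t such that |T + X| ≥ (t/|T'|)·|T' + X|. -/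
/-!
Removing one element `a` from `S` only loses the elements of `S + X` all of whose
representations `s + x` have `s = a`. These sets are disjoint for distinct `a`, so some `a`
loses at most `|S + X| / |S|` of them, i.e. `|S.erase a + X| ≥ (1 - 1/|S|) |S + X|`.
Removing elements one by one from `T'` down to size `t`, the factors telescope to `t / |T'|`.
-/

open Finset Pointwise

namespace Finset

variable {G : Type*} [DecidableEq G] [Add G]

theorem disjoint_sdiff_add_erase_add {S X : Finset G} {a b : G} (hab : a ≠ b) :
    Disjoint ((S + X) \ (S.erase a + X)) ((S + X) \ (S.erase b + X)) := by
  refine disjoint_left.2 fun y hya hyb => ?_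
  obtain ⟨c, hc, x, hx, rfl⟩ := mem_add.1 (mem_sdiff.1 hya).1
  have hca : c = a := by_contra fun h =>
    (mem_sdiff.1 hya).2 (add_mem_add (mem_erase.2 ⟨h, hc⟩) hx)
  have hcb : c = b := by_contra fun h =>
    (mem_sdiff.1 hyb).2 (add_mem_add (mem_erase.2 ⟨h, hc⟩) hx)
  exact hab (hca.symm.trans hcb)

theorem exists_card_mul_card_add_le_card_erase_add {S : Finset G} (hS : S.Nonempty)
    (X : Finset G) : ∃ a ∈ S, #S * #(S + X) ≤ #(S + X) + #S * #(S.erase a + X) := by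
  set lost : G → Finset G := fun a => (S + X) \ (S.erase a + X)
  obtain ⟨a, ha, hmin⟩ := S.exists_min_image (fun a => #(lost a)) hS
  refine ⟨a, ha, ?_⟩
  have hsum : #S * #(lost a) ≤ #(S + X) :=
    calc #S * #(lost a) ≤ ∑ b ∈ S, #(lost b) := S.card_nsmul_le_sum _ _ hmin
      _ = #(S.biUnion lost) :=
        (card_biUnion fun _ _ _ _ hbc => disjoint_sdiff_add_erase_add hbc).symm
      _ ≤ #(S + X) := card_le_card (biUnion_subset.2 fun _ _ => sdiff_subset)
  have hsplit : #(lost a) + #(S.erase a + X) = #(S + X) :=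
    card_sdiff_add_card_eq_card (add_subset_add_right (erase_subset a S))
  calc #S * #(S + X) = #S * #(lost a) + #S * #(S.erase a + X) := by rw [← hsplit, mul_add]
    _ ≤ #(S + X) + #S * #(S.erase a + X) := by gcongr

theorem exists_subset_card_eq_mul_card_add_le (X S : Finset G) {t : ℕ} (ht : t ≤ #S) :
    ∃ T ⊆ S, #T = t ∧ t * #(S + X) ≤ #S * #(T + X) := by
  induction S using strongInduction generalizing t with
  | H S ih =>
  obtain rfl | hlt := ht.eq_or_lt
  · exact ⟨S, Subset.rfl, rfl, le_rfl⟩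
  obtain ⟨a, ha, hkey⟩ := exists_card_mul_card_add_le_card_erase_add
    (card_pos.1 (by omega : 0 < #S)) X
  have hcard : #(S.erase a) + 1 = #S := card_erase_add_one ha
  have htm : t ≤ #(S.erase a) := by omega
  obtain ⟨T, hTS, hTt, hT⟩ := @ih _ (erase_ssubset ha) t htm
  refine ⟨T, hTS.trans (erase_subset a S), hTt, ?_⟩
  rw [← hcard] at hkey ⊢
  set m := #(S.erase a)
  rcases m.eq_zero_or_pos with hm | hm
  · obtain rfl : t = 0 := by omega
    simp
  refine Nat.le_of_mul_le_mul_left ?_ hm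
  calc m * (t * #(S + X)) = t * (m * #(S + X)) := by ring
    _ ≤ t * ((m + 1) * #(S.erase a + X)) := Nat.mul_le_mul_left t (by linarith)
    _ = (m + 1) * (t * #(S.erase a + X)) := by ring
    _ ≤ (m + 1) * (m * #(T + X)) := by gcongr
    _ = m * ((m + 1) * #(T + X)) := by ring

end Finset

theorem exists_subset_card_eq_sumset_large_general {G : Type*} [AddCommGroup G] [DecidableEq G]
    (T' X : Finset G)
    (t : ℕ) (ht2 : t ≤ T'.card) :
    ∃ T ⊆ T', T.card = t ∧
      ((t : ℝ) / (T'.card : ℝ)) * ((T' + X).card : ℝ) ≤ ((T + X).card : ℝ) := by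
  obtain ⟨T, hTT', hT, hle⟩ := exists_subset_card_eq_mul_card_add_le X T' ht2
  refine ⟨T, hTT', hT, ?_⟩
  rw [div_mul_eq_mul_div]
  refine div_le_of_le_mul₀ (Nat.cast_nonneg _) (Nat.cast_nonneg _) ?_
  rw [mul_comm (#(T + X) : ℝ)]
  exact_mod_cast hle

theorem exists_subset_card_eq_sumset_large {G : Type*} [AddCommGroup G] [DecidableEq G]
    (T' X : Finset G) (hT' : T'.Nonempty) (hX : X.Nonempty)
    (t : ℕ) (ht1 : 1 ≤ t) (ht2 : t ≤ T'.card) :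
    ∃ T ⊆ T', T.card = t ∧
      ((t : ℝ) / (T'.card : ℝ)) * ((T' + X).card : ℝ) ≤ ((T + X).card : ℝ) :=
  exists_subset_card_eq_sumset_large_general T' X t ht2
end
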